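/- arXiv:2412.15422 — 2 statements merged into one kernel-verified Lean document; each statement's English description precedes it below -/
import Mathlib

section
/- Taylor expansion of the Wilson action on the Lie algebra (claim in the proof of Lemma 3.1): For every N×N skew-Hermitian complex matrix A one has |Re Tr(I − exp(A)) − (1/2)·Tr(A·Aᴴ)| ≤ (1/24)·(Tr(A·Aᴴ))². (Here Tr(A·Aᴴ) is a nonnegative real number; in particular Re Tr(A) = 0, Tr(A²) = −Tr(A·Aᴴ) and Re Tr(A³) = 0 for skew-Hermitian A.) -/
/-!
Write `A = -i • B` with `B` Hermitian with eigenvalues `μⱼ`. Diagonalising `B` by a unitary gives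
`Re Tr(exp A) = ∑ cos μⱼ` and `Tr(A Aᴴ) = ∑ μⱼ²`, so the claim is the scalar Taylor bound
`|1 - cos x - x²/2| ≤ x⁴/24`, summed over the eigenvalues, combined with `∑ μⱼ⁴ ≤ (∑ μⱼ²)²`.
-/

open Matrix
open scoped Matrix

noncomputable section

namespace Real

theorem cos_le_one_sub_sq_div_two_add_pow_four_div (x : ℝ) :
    cos x ≤ 1 - x ^ 2 / 2 + x ^ 4 / 24 := by
  set g : ℝ → ℝ := fun t ↦ 1 - t ^ 2 / 2 + t ^ 4 / 24 - cos t
  have hg (t : ℝ) : HasDerivAt g (sin t - (t - t ^ 3 / 6)) t := by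
    refine ((((hasDerivAt_pow 2 t).div_const 2).const_sub 1).fun_add
      ((hasDerivAt_pow 4 t).div_const 24) |>.fun_sub (hasDerivAt_cos t)).congr_deriv ?_
    push_cast; ring
  have hmono : MonotoneOn g (Set.Ici 0) := by
    refine monotoneOn_of_deriv_nonneg (convex_Ici 0)
      (fun t _ ↦ (hg t).continuousAt.continuousWithinAt)
      (fun t _ ↦ (hg t).differentiableAt.differentiableWithinAt) fun t ht ↦ ?_
    rw [interior_Ici] at ht
    rw [(hg t).deriv, sub_nonneg]
    exact sin_ge_sub_cube ht.le
  -- `g` is even, so it suffices to compare `g 0` with `g |x|`.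
  have := hmono Set.self_mem_Ici (abs_nonneg x) (abs_nonneg x)
  simp only [g, cos_abs, sq_abs, Even.pow_abs (by decide : Even 4)] at this
  norm_num at this
  linarith

theorem abs_one_sub_cos_sub_sq_div_two_le (x : ℝ) : |1 - cos x - x ^ 2 / 2| ≤ x ^ 4 / 24 := by
  have := cos_le_one_sub_sq_div_two_add_pow_four_div x
  have := one_sub_sq_div_two_le_cos (x := x)
  rw [abs_le]
  constructor <;> nlinarith [sq_nonneg (x ^ 2)]

end Real

theorem abs_sum_one_sub_cos_sub_le {ι : Type*} (s : Finset ι) (x : ι → ℝ) :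
    |∑ i ∈ s, (1 - Real.cos (x i)) - 1 / 2 * ∑ i ∈ s, x i ^ 2| ≤
      1 / 24 * (∑ i ∈ s, x i ^ 2) ^ 2 :=
  calc |∑ i ∈ s, (1 - Real.cos (x i)) - 1 / 2 * ∑ i ∈ s, x i ^ 2|
      = |∑ i ∈ s, (1 - Real.cos (x i) - x i ^ 2 / 2)| := by
        rw [Finset.mul_sum, ← Finset.sum_sub_distrib]; congr! 3; ring
    _ ≤ ∑ i ∈ s, x i ^ 4 / 24 := Finset.abs_sum_le_sum_abs _ _ |>.trans <|
        Finset.sum_le_sum fun i _ ↦ Real.abs_one_sub_cos_sub_sq_div_two_le (x i)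
    _ = 1 / 24 * ∑ i ∈ s, (x i ^ 2) ^ 2 := by rw [Finset.mul_sum]; congr! 1; ring
    _ ≤ 1 / 24 * (∑ i ∈ s, x i ^ 2) ^ 2 := by
        gcongr; exact Finset.sum_sq_le_sq_sum_of_nonneg fun i _ ↦ sq_nonneg _

namespace Matrix

variable {n : Type*} [Fintype n] [DecidableEq n]

theorem trace_unitary_conj {R : Type*} [CommSemiring R] [StarRing R] (u : unitary (Matrix n n R))
    (M : Matrix n n R) : trace ((u : Matrix n n R) * M * star (u : Matrix n n R)) = trace M := by
  rw [trace_mul_cycle, Unitary.coe_star_mul_self, one_mul]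

theorem exp_unitary_conj {𝔸 : Type*} [NormedRing 𝔸] [NormedAlgebra ℚ 𝔸] [CompleteSpace 𝔸]
    [StarRing 𝔸] (u : unitary (Matrix n n 𝔸)) (M : Matrix n n 𝔸) :
    NormedSpace.exp ((u : Matrix n n 𝔸) * M * star (u : Matrix n n 𝔸)) =
      u * NormedSpace.exp M * star (u : Matrix n n 𝔸) := by
  simpa [← map_inv, ← Unitary.star_eq_inv] using exp_units_conj (Unitary.toUnits u) M

namespace IsHermitian

variable {B : Matrix n n ℂ} (hB : B.IsHermitian)
include hB

theorem trace_exp_smul (c : ℂ) :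
    trace (NormedSpace.exp (c • B)) = ∑ i, Complex.exp (c * hB.eigenvalues i) := by
  conv_lhs => rw [hB.spectral_theorem]
  rw [Unitary.conjStarAlgAut_apply, ← smul_mul_assoc, ← mul_smul_comm, exp_unitary_conj,
    trace_unitary_conj, ← diagonal_smul, exp_diagonal, trace_diagonal]
  simp [Complex.exp_eq_exp_ℂ]

theorem trace_mul_self : trace (B * B) = ∑ i, (hB.eigenvalues i : ℂ) ^ 2 := by
  conv_lhs => rw [hB.spectral_theorem]
  rw [← map_mul, Unitary.conjStarAlgAut_apply, trace_unitary_conj, diagonal_mul_diagonal,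
    trace_diagonal]
  simp [sq]

end IsHermitian

end Matrix

theorem wilson_action_taylor_general (N : ℕ)
    (A : Matrix (Fin N) (Fin N) ℂ) (hA : Aᴴ = -A) :
    |(Matrix.trace ((1 : Matrix (Fin N) (Fin N) ℂ) - NormedSpace.exp A)).re -
        1 / 2 * (Matrix.trace (A * Aᴴ)).re| ≤
      1 / 24 * ((Matrix.trace (A * Aᴴ)).re) ^ 2 := by
  obtain ⟨B, hB, rfl⟩ :
      ∃ B : Matrix (Fin N) (Fin N) ℂ, B.IsHermitian ∧ A = (-Complex.I) • B := by
    refine ⟨Complex.I • A, ?_, by simp [smul_smul]⟩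
    rw [IsHermitian, conjTranspose_smul, hA, Complex.star_def, Complex.conj_I, smul_neg, neg_smul,
      neg_neg]
  have h_exp : (trace (1 - NormedSpace.exp ((-Complex.I) • B))).re =
      ∑ i, (1 - Real.cos (hB.eigenvalues i)) := by
    rw [trace_sub, trace_one, hB.trace_exp_smul]
    simp [Complex.exp_re]
  have h_sq :
      (trace ((-Complex.I) • B * ((-Complex.I) • B)ᴴ)).re = ∑ i, hB.eigenvalues i ^ 2 := by
    rw [conjTranspose_smul, hB.eq]
    simp [hB.trace_mul_self, ← Complex.ofReal_pow]
  rw [h_exp, h_sq]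
  exact abs_sum_one_sub_cos_sub_le _ _

/-- **Taylor expansion of the Wilson action on the Lie algebra**
(claim in the proof of Lemma 3.1): for every skew-Hermitian `A`,
`|Re Tr(I − exp A) − ½ Tr(A Aᴴ)| ≤ (1/24) (Tr(A Aᴴ))²`. -/
theorem wilson_action_taylor (N : ℕ) (hN : 1 ≤ N)
    (A : Matrix (Fin N) (Fin N) ℂ) (hA : Aᴴ = -A) :
    |(Matrix.trace ((1 : Matrix (Fin N) (Fin N) ℂ) - NormedSpace.exp A)).re -
        1 / 2 * (Matrix.trace (A * Aᴴ)).re| ≤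
      1 / 24 * ((Matrix.trace (A * Aᴴ)).re) ^ 2 :=
  wilson_action_taylor_general N A hA
end
end

section
/- Second-derivative bound (inequality (4.3) in the proof of Lemma 4.1): For every A ∈ u(N) and all a₁, a₂ ∈ U(N), one has |tr(A·a₁)·Tr(ρ(A)·τ(a₂))| ≤ (1/N)·|A|²·|c|^{1/2}·d. -/
open Matrix
open scoped Matrix

noncomputable section

/-- The inner product on `u(N)`: `⟨X,Y⟩ = N · Re Tr (X Yᴴ)`. -/
def gInner (N : ℕ) (X Y : Matrix (Fin N) (Fin N) ℂ) : ℝ :=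
  (N : ℝ) * (Matrix.trace (X * Yᴴ)).re

/-- The norm on `u(N)`. -/
def gNorm (N : ℕ) (X : Matrix (Fin N) (Fin N) ℂ) : ℝ :=
  Real.sqrt (gInner N X X)

/-- Skew-Hermitian matrices (the Lie algebra `u(N)`). -/
def IsSkew (N : ℕ) (A : Matrix (Fin N) (Fin N) ℂ) : Prop := Aᴴ = -A

/-- The normalized trace `tr = (1/N)·Tr`, as a complex number. -/
def ntr (N : ℕ) (A : Matrix (Fin N) (Fin N) ℂ) : ℂ :=
  Matrix.trace A / (N : ℂ)

/-!
Both traces are Frobenius inner products, and a unitary `a ∈ U(n)` has Frobenius norm `√n`, so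
Cauchy–Schwarz gives `|Tr(A a₁)| ≤ √N ‖A‖_F` and `|Tr(ρ(A) τ(a₂))| ≤ √d ‖ρ(A)‖_F`. Writing
`A = ∑ fⱼ Lⱼ` in the orthonormal basis, `|A|² = ∑ fⱼ²`, and Cauchy–Schwarz again gives
`‖ρ(A)‖_F² ≤ |A|² ∑ ‖ρ(Lⱼ)‖_F²`. As the `ρ(Lⱼ)` are skew-Hermitian, the last sum is
`-Re Tr ∑ ρ(Lⱼ)² = -c d` by the Casimir identity. Since `|A| = √N ‖A‖_F`, the bound follows.
-/

open Finset

section FrobeniusVec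

variable {𝕜 : Type*} [RCLike 𝕜] {m n : Type*}

def frobeniusVec : Matrix m n 𝕜 →ₗ[𝕜] EuclideanSpace 𝕜 (m × n) where
  toFun X := WithLp.toLp 2 fun p => X p.1 p.2
  map_add' _ _ := rfl
  map_smul' _ _ := rfl

@[simp]
theorem frobeniusVec_apply (X : Matrix m n 𝕜) (p : m × n) : frobeniusVec X p = X p.1 p.2 :=
  rfl

variable [Fintype m] [Fintype n]

theorem inner_frobeniusVec (X Y : Matrix m n 𝕜) :
    inner 𝕜 (frobeniusVec Y) (frobeniusVec X) = trace (X * Yᴴ) := by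
  simp only [PiLp.inner_apply, RCLike.inner_apply, frobeniusVec_apply, trace, Matrix.diag,
    mul_apply, conjTranspose_apply, Fintype.sum_prod_type, RCLike.star_def]

theorem norm_frobeniusVec_sq (X : Matrix m n 𝕜) :
    ‖frobeniusVec X‖ ^ 2 = RCLike.re (trace (X * Xᴴ)) := by
  rw [← inner_frobeniusVec, inner_self_eq_norm_sq]

theorem norm_trace_mul_conjTranspose_le (X Y : Matrix m n 𝕜) :
    ‖trace (X * Yᴴ)‖ ≤ ‖frobeniusVec X‖ * ‖frobeniusVec Y‖ := by
  rw [← inner_frobeniusVec, mul_comm]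
  exact norm_inner_le_norm _ _

theorem norm_frobeniusVec_sq_of_conjTranspose_eq_neg {X : Matrix n n 𝕜} (hX : Xᴴ = -X) :
    ‖frobeniusVec X‖ ^ 2 = -RCLike.re (trace (X * X)) := by
  rw [norm_frobeniusVec_sq, hX, mul_neg, trace_neg, map_neg]

variable [DecidableEq n]

theorem norm_frobeniusVec_unitary (a : unitaryGroup n 𝕜) :
    ‖frobeniusVec (a : Matrix n n 𝕜)‖ = √(Fintype.card n) := by
  rw [← Real.sqrt_sq (norm_nonneg _), norm_frobeniusVec_sq, ← star_eq_conjTranspose,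
    Unitary.mul_star_self_of_mem a.prop, trace_one]
  simp

theorem norm_trace_mul_unitary_le (X : Matrix n n 𝕜) (a : unitaryGroup n 𝕜) :
    ‖trace (X * (a : Matrix n n 𝕜))‖ ≤ ‖frobeniusVec X‖ * √(Fintype.card n) := by
  have h := norm_trace_mul_conjTranspose_le X ((star a : unitaryGroup n 𝕜) : Matrix n n 𝕜)
  rwa [norm_frobeniusVec_unitary, Unitary.coe_star, star_eq_conjTranspose,
    conjTranspose_conjTranspose] at h

theorem sum_norm_frobeniusVec_sq_of_casimir {ι : Type*} [Fintype ι] {M : ι → Matrix n n 𝕜}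
    (hM : ∀ j, (M j)ᴴ = -M j) {c : ℝ} (hC : ∑ j, M j * M j = c • 1) :
    ∑ j, ‖frobeniusVec (M j)‖ ^ 2 = -c * Fintype.card n := by
  simp only [norm_frobeniusVec_sq_of_conjTranspose_eq_neg (hM _)]
  rw [sum_neg_distrib, ← map_sum, ← trace_sum, hC, trace_smul, trace_one, RCLike.smul_re]
  simp

end FrobeniusVec

theorem norm_sum_smul_le_sqrt_mul_sqrt {ι E : Type*} [Fintype ι] [SeminormedAddCommGroup E]
    [NormedSpace ℝ E] (f : ι → ℝ) (v : ι → E) :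
    ‖∑ i, f i • v i‖ ≤ √(∑ i, f i ^ 2) * √(∑ i, ‖v i‖ ^ 2) := by
  calc ‖∑ i, f i • v i‖ ≤ ∑ i, |f i| * ‖v i‖ := by
        simpa only [norm_smul, Real.norm_eq_abs] using norm_sum_le univ fun i => f i • v i
    _ ≤ √(∑ i, |f i| ^ 2) * √(∑ i, ‖v i‖ ^ 2) := Real.sum_mul_le_sqrt_mul_sqrt _ _ _
    _ = √(∑ i, f i ^ 2) * √(∑ i, ‖v i‖ ^ 2) := by simp only [sq_abs]

section UnitaryLieAlgebra

variable {N : ℕ}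

theorem gInner_self (X : Matrix (Fin N) (Fin N) ℂ) :
    gInner N X X = N * ‖frobeniusVec X‖ ^ 2 := by
  rw [norm_frobeniusVec_sq]
  rfl

theorem gNorm_eq (X : Matrix (Fin N) (Fin N) ℂ) : gNorm N X = √N * ‖frobeniusVec X‖ := by
  rw [gNorm, gInner_self, Real.sqrt_mul (Nat.cast_nonneg N), Real.sqrt_sq (norm_nonneg _)]

theorem gInner_sum_smul_left {ι : Type*} [Fintype ι] (f : ι → ℝ)
    (L : ι → Matrix (Fin N) (Fin N) ℂ) (Y : Matrix (Fin N) (Fin N) ℂ) :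
    gInner N (∑ i, f i • L i) Y = ∑ i, f i * gInner N (L i) Y := by
  simp only [gInner, Matrix.sum_mul, Matrix.smul_mul, trace_sum, trace_smul,
    Complex.re_sum, Complex.smul_re, smul_eq_mul, mul_sum]
  exact sum_congr rfl fun i _ => mul_left_comm _ _ _

theorem gInner_sum_smul_right {ι : Type*} [Fintype ι] (f : ι → ℝ)
    (L : ι → Matrix (Fin N) (Fin N) ℂ) (X : Matrix (Fin N) (Fin N) ℂ) :
    gInner N X (∑ j, f j • L j) = ∑ j, f j * gInner N X (L j) := by
  simp only [gInner, conjTranspose_sum, conjTranspose_smul, star_trivial,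
    Matrix.mul_smul, trace_sum, trace_smul, Complex.re_sum, Complex.smul_re, smul_eq_mul, mul_sum]
  exact sum_congr rfl fun i _ => mul_left_comm _ _ _

theorem gInner_sum_smul_self_of_orthonormal {ι : Type*} [Fintype ι] [DecidableEq ι]
    {L : ι → Matrix (Fin N) (Fin N) ℂ} (hL : ∀ i j, gInner N (L i) (L j) = if i = j then 1 else 0)
    (f : ι → ℝ) :
    gInner N (∑ i, f i • L i) (∑ i, f i • L i) = ∑ i, f i ^ 2 := by
  simp [gInner_sum_smul_left, gInner_sum_smul_right, hL, sq]

theorem norm_frobeniusVec_map_le_gNorm {ι : Type*} [Fintype ι] [DecidableEq ι] {d : ℕ}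
    {L : ι → Matrix (Fin N) (Fin N) ℂ} (hL : ∀ i j, gInner N (L i) (L j) = if i = j then 1 else 0)
    (ρ : Matrix (Fin N) (Fin N) ℂ →ₗ[ℝ] Matrix (Fin d) (Fin d) ℂ)
    (hρ : ∀ j, (ρ (L j))ᴴ = -ρ (L j)) {c : ℝ}
    (hC : ∑ j, ρ (L j) * ρ (L j) = c • 1) {A : Matrix (Fin N) (Fin N) ℂ}
    (hA : A ∈ Submodule.span ℝ (Set.range L)) :
    ‖frobeniusVec (ρ A)‖ ≤ gNorm N A * √(-c * d) := by
  obtain ⟨f, rfl⟩ := (Submodule.mem_span_range_iff_exists_fun ℝ).1 hA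
  have hvec : frobeniusVec (ρ (∑ j, f j • L j)) = ∑ j, f j • frobeniusVec (ρ (L j)) := by
    simp only [map_sum, map_smul, LinearMap.map_smul_of_tower]
  have hcasimir := sum_norm_frobeniusVec_sq_of_casimir hρ hC
  rw [Fintype.card_fin] at hcasimir
  rw [hvec, gNorm, gInner_sum_smul_self_of_orthonormal hL, ← hcasimir]
  exact norm_sum_smul_le_sqrt_mul_sqrt f _

theorem norm_ntr (X : Matrix (Fin N) (Fin N) ℂ) : ‖ntr N X‖ = ‖trace X‖ / N := by
  rw [ntr, norm_div, Complex.norm_natCast]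

end UnitaryLieAlgebra

theorem second_derivative_bound_general (N : ℕ)
    (L : Fin (N ^ 2) → Matrix (Fin N) (Fin N) ℂ)
    (hLskew : ∀ j, IsSkew N (L j))
    (hLorth : ∀ i j, gInner N (L i) (L j) = if i = j then 1 else 0)
    (hLspan : ∀ X : Matrix (Fin N) (Fin N) ℂ, IsSkew N X →
      X ∈ Submodule.span ℝ (Set.range L))
    (d : ℕ)
    (τ : Matrix.unitaryGroup (Fin N) ℂ →* Matrix.unitaryGroup (Fin d) ℂ)
    (ρ : Matrix (Fin N) (Fin N) ℂ →ₗ[ℝ] Matrix (Fin d) (Fin d) ℂ)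
    (hρskew : ∀ A : Matrix (Fin N) (Fin N) ℂ, IsSkew N A → (ρ A)ᴴ = -(ρ A))
    (c : ℝ) (hc : c ≤ 0)
    (hCasimir : (∑ j, ρ (L j) * ρ (L j)) = c • (1 : Matrix (Fin d) (Fin d) ℂ))
    (A : Matrix (Fin N) (Fin N) ℂ) (hA : IsSkew N A)
    (a₁ : Matrix.unitaryGroup (Fin N) ℂ) (a₂ : Matrix.unitaryGroup (Fin N) ℂ) :
    ‖ntr N (A * (a₁ : Matrix (Fin N) (Fin N) ℂ)) *
        Matrix.trace (ρ A * ((τ a₂ : Matrix (Fin d) (Fin d) ℂ)))‖ ≤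
      1 / N * gNorm N A ^ 2 * Real.sqrt |c| * d := by
  have hρA := norm_frobeniusVec_map_le_gNorm hLorth ρ (fun j => hρskew _ (hLskew j)) hCasimir
    (hLspan A hA)
  have h₁ := norm_trace_mul_unitary_le A a₁
  have h₂ := norm_trace_mul_unitary_le (ρ A) (τ a₂)
  simp only [Fintype.card_fin] at h₁ h₂
  rw [norm_mul, norm_ntr]
  calc ‖trace (A * (a₁ : Matrix (Fin N) (Fin N) ℂ))‖ / N *
        ‖trace (ρ A * (τ a₂ : Matrix (Fin d) (Fin d) ℂ))‖
      ≤ ‖frobeniusVec A‖ * √N / N * (gNorm N A * √(-c * d) * √d) := by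
        gcongr
        exact h₂.trans (mul_le_mul_of_nonneg_right hρA (Real.sqrt_nonneg _))
    _ = 1 / N * gNorm N A ^ 2 * √|c| * d := by
        rw [gNorm_eq, abs_of_nonpos hc, Real.sqrt_mul (neg_nonneg.2 hc)]
        have hd : √(d : ℝ) * √d = d := Real.mul_self_sqrt (Nat.cast_nonneg d)
        calc _ = 1 / N * (√N * ‖frobeniusVec A‖) ^ 2 * √(-c) * (√d * √d) := by ring
          _ = _ := by rw [hd]

/-- **Second-derivative bound** (inequality (4.3) in the proof of Lemma 4.1): for every
`A ∈ u(N)` and all `a₁, a₂ ∈ U(N)`,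
`|tr(A a₁) · Tr(ρ(A) τ(a₂))| ≤ (1/N) |A|² |c|^{1/2} d`. -/
theorem second_derivative_bound (N : ℕ) (hN : 1 ≤ N)
    (L : Fin (N ^ 2) → Matrix (Fin N) (Fin N) ℂ)
    (hLskew : ∀ j, IsSkew N (L j))
    (hLorth : ∀ i j, gInner N (L i) (L j) = if i = j then 1 else 0)
    (hLspan : ∀ X : Matrix (Fin N) (Fin N) ℂ, IsSkew N X →
      X ∈ Submodule.span ℝ (Set.range L))
    (d : ℕ) (hd : 1 ≤ d)
    (τ : Matrix.unitaryGroup (Fin N) ℂ →* Matrix.unitaryGroup (Fin d) ℂ)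
    (hτ : Continuous τ)
    (ρ : Matrix (Fin N) (Fin N) ℂ →ₗ[ℝ] Matrix (Fin d) (Fin d) ℂ)
    (hρskew : ∀ A : Matrix (Fin N) (Fin N) ℂ, IsSkew N A → (ρ A)ᴴ = -(ρ A))
    (hτρ : ∀ A : Matrix (Fin N) (Fin N) ℂ, IsSkew N A →
      ∀ h : NormedSpace.exp A ∈ Matrix.unitaryGroup (Fin N) ℂ,
        ((τ ⟨NormedSpace.exp A, h⟩ : Matrix.unitaryGroup (Fin d) ℂ) :
            Matrix (Fin d) (Fin d) ℂ) = NormedSpace.exp (ρ A))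
    (c : ℝ) (hc : c ≤ 0)
    (hCasimir : (∑ j, ρ (L j) * ρ (L j)) = c • (1 : Matrix (Fin d) (Fin d) ℂ))
    (A : Matrix (Fin N) (Fin N) ℂ) (hA : IsSkew N A)
    (a₁ : Matrix.unitaryGroup (Fin N) ℂ) (a₂ : Matrix.unitaryGroup (Fin N) ℂ) :
    ‖ntr N (A * (a₁ : Matrix (Fin N) (Fin N) ℂ)) *
        Matrix.trace (ρ A * ((τ a₂ : Matrix (Fin d) (Fin d) ℂ)))‖ ≤
      1 / N * gNorm N A ^ 2 * Real.sqrt |c| * d :=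
  second_derivative_bound_general N L hLskew hLorth hLspan d τ ρ hρskew c hc hCasimir A hA a₁ a₂
end
end
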